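/- arXiv:hep-lat/0006027 — 3 statements merged into one kernel-verified Lean document; each statement's English description precedes it below -/
import Mathlib

section
/- Let P(x,y) and Q(x,y) be polynomials over the complex numbers with Q(0,0) = 0, and suppose the rational function R = P/Q is analytic (i.e., extends to an analytic function) in some neighborhood of the origin. Then P and Q have a common polynomial factor F such that writing P = F·P̃ and Q = F·Q̃, one has Q̃(0,0) ≠ 0. -/
noncomputable section AuxForStmt0
open Polynomial Multiset

abbrev BB := Polynomial (Polynomial ℂ)

def evB (a b : ℂ) : BB →+* ℂ :=
  (Polynomial.evalRingHom b).comp (Polynomial.mapRingHom (Polynomial.evalRingHom a))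

lemma evB_apply (a b : ℂ) (f : BB) :
    evB a b f = Polynomial.eval b (f.map (Polynomial.evalRingHom a)) := rfl

def eAB : MvPolynomial (Fin 2) ℂ →+* BB :=
  (MvPolynomial.eval₂Hom ((Polynomial.C).comp (Polynomial.C))
    ![Polynomial.C Polynomial.X, Polynomial.X])

def gBA : BB →+* MvPolynomial (Fin 2) ℂ :=
  Polynomial.eval₂RingHom
    (Polynomial.eval₂RingHom (MvPolynomial.C) (MvPolynomial.X 0)) (MvPolynomial.X 1)

lemma eval_eq_evB (a b : ℂ) (P : MvPolynomial (Fin 2) ℂ) :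
    MvPolynomial.eval ![a, b] P = evB a b (eAB P) := by
  have : (MvPolynomial.eval ![a, b]) = (evB a b).comp eAB := by
    apply MvPolynomial.ringHom_ext
    · intro r; simp [eAB, evB]
    · intro i
      fin_cases i <;> simp [eAB, evB]
  rw [this]; rfl

lemma gBA_eAB (P : MvPolynomial (Fin 2) ℂ) : gBA (eAB P) = P := by
  have : gBA.comp eAB = RingHom.id _ := by
    apply MvPolynomial.ringHom_ext
    · intro r; simp [eAB, gBA]
    · intro i; fin_cases i <;> simp [eAB, gBA]
  calc gBA (eAB P) = (gBA.comp eAB) P := rfl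
  _ = P := by rw [this]; rfl

lemma eAB_gBA (f : BB) : eAB (gBA f) = f := by
  have hC : ∀ c : Polynomial ℂ, eAB (gBA (Polynomial.C c)) = Polynomial.C c := by
    intro c
    have : (eAB.comp gBA).comp (Polynomial.C : Polynomial ℂ →+* BB)
        = (Polynomial.C : Polynomial ℂ →+* BB) := by
      apply Polynomial.ringHom_ext
      · intro a; simp [eAB, gBA]
      · simp [eAB, gBA]
    calc eAB (gBA (Polynomial.C c)) = ((eAB.comp gBA).comp Polynomial.C) c := rfl
    _ = Polynomial.C c := by rw [this]
  have : eAB.comp gBA = RingHom.id _ := by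
    apply Polynomial.ringHom_ext
    · intro a; exact hC a
    · simp [eAB, gBA]
  calc eAB (gBA f) = (eAB.comp gBA) f := rfl
  _ = f := by rw [this]; rfl


lemma evB_continuous (f : BB) : Continuous fun z : ℂ × ℂ => evB z.1 z.2 f := by
  induction f using Polynomial.induction_on' with
  | add p q hp hq => simp only [_root_.map_add]; exact hp.add hq
  | monomial n c =>
      have : ∀ z : ℂ × ℂ, evB z.1 z.2 (monomial n c) = (c.eval z.1) * z.2 ^ n := by
        intro z; simp [evB_apply]
      simp only [this]
      exact ((c.continuous).comp continuous_fst).mul ((continuous_snd).pow n)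

noncomputable def Complex.abs : AbsoluteValue ℂ ℝ :=
  IsAbsoluteValue.toAbsoluteValue (norm : ℂ → ℝ)

@[simp] lemma Complex.abs_apply_norm (z : ℂ) : Complex.abs z = ‖z‖ := rfl

lemma Complex.abs_ofReal (r : ℝ) : Complex.abs r = |r| := by simp

lemma Complex.continuous_abs : Continuous Complex.abs := by
  exact continuous_norm

lemma ball_infinite (c : ℂ) {r : ℝ} (hr : 0 < r) : (Metric.ball c r).Infinite := by
  apply Set.infinite_of_injective_forall_mem
    (f := fun n : ℕ => c + (r / (n + 2) : ℝ))
  case hi =>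
    intro m n hmn
    simp only at hmn
    have h2 := add_left_cancel hmn
    rw [Complex.ofReal_inj] at h2
    have hm : (0:ℝ) < m + 2 := by positivity
    have hn : (0:ℝ) < n + 2 := by positivity
    rw [div_eq_div_iff (ne_of_gt hm) (ne_of_gt hn)] at h2
    have h3 : r * ((m:ℝ) + 2) = r * ((n:ℝ) + 2) := by ring_nf; ring_nf at h2; linarith
    have h4 := mul_left_cancel₀ (ne_of_gt hr) h3
    have : (m : ℝ) = n := by linarith
    exact_mod_cast this
  case hf =>
    intro n
    rw [Metric.mem_ball, Complex.dist_eq, add_sub_cancel_left]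
    rw [← Complex.abs_apply_norm, Complex.abs_ofReal, abs_of_pos (by positivity)]
    rw [div_lt_iff₀ (by positivity)]
    nlinarith [hr]

lemma eq_zero_of_ball (f : BB) (z₀ : ℂ × ℂ) {r : ℝ} (hr : 0 < r)
    (hv : ∀ z ∈ Metric.ball z₀ r, evB z.1 z.2 f = 0) : f = 0 := by
  have key : ∀ a ∈ Metric.ball z₀.1 r, f.map (Polynomial.evalRingHom a) = 0 := by
    intro a ha
    apply Polynomial.eq_zero_of_infinite_isRoot
    apply Set.Infinite.mono (s := Metric.ball z₀.2 r)
    · intro b hb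
      have : ((a, b) : ℂ × ℂ) ∈ Metric.ball z₀ r := by
        rw [Metric.mem_ball] at ha hb ⊢
        rw [Prod.dist_eq]; exact max_lt ha hb
      have := hv (a, b) this
      simpa [evB_apply, Polynomial.IsRoot] using this
    · exact ball_infinite _ hr
  ext n m
  have : ∀ a ∈ Metric.ball z₀.1 r, ((f.coeff n).eval a) = 0 := by
    intro a ha
    have := key a ha
    have := congrArg (fun p => Polynomial.coeff p n) this
    simpa using this
  have : f.coeff n = 0 := by
    apply Polynomial.eq_zero_of_infinite_isRoot
    exact Set.Infinite.mono (fun a ha => this a ha) (ball_infinite _ hr)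
  simp [this]

lemma evB_dense {d : BB} (hd : d ≠ 0) (z₀ : ℂ × ℂ) {r : ℝ} (hr : 0 < r) :
    ∃ z ∈ Metric.ball z₀ r, evB z.1 z.2 d ≠ 0 := by
  by_contra h
  push_neg at h
  exact hd (eq_zero_of_ball d z₀ hr h)

lemma multiset_exists_min_abs (s : Multiset ℂ) (hs : s ≠ 0) :
    ∃ y ∈ s, ∀ z ∈ s, Complex.abs y ≤ Complex.abs z := by
  induction s using Multiset.induction_on with
  | empty => exact absurd rfl hs
  | cons a t ih =>
    rcases eq_or_ne t 0 with rfl | ht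
    · refine ⟨a, mem_cons_self a 0, ?_⟩
      intro z hz
      rw [mem_cons] at hz
      rcases hz with rfl | hz
      · exact le_refl _
      · simp at hz
    · obtain ⟨y, hy, hmin⟩ := ih ht
      rcases le_total (Complex.abs a) (Complex.abs y) with hle | hle
      · refine ⟨a, mem_cons_self a t, ?_⟩
        intro z hz; rw [mem_cons] at hz
        rcases hz with rfl | hz; · rfl
        · exact hle.trans (hmin z hz)
      · refine ⟨y, mem_cons_of_mem hy, ?_⟩
        intro z hz; rw [mem_cons] at hz
        rcases hz with rfl | hz; · exact hle
        · exact hmin z hz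

lemma multiset_abs_sum_le (s : Multiset ℂ) :
    Complex.abs s.sum ≤ (s.map Complex.abs).sum := by
  induction s using Multiset.induction_on with
  | empty => simp
  | cons a t ih =>
    simp only [sum_cons, map_cons]
    exact (Complex.abs.add_le _ _).trans (by linarith)

lemma multiset_pow_le_prod {m : ℝ} (hm : 0 ≤ m) (t : Multiset ℂ)
    (ht : ∀ z ∈ t, m ≤ Complex.abs z) :
    m ^ (Multiset.card t) ≤ (t.map Complex.abs).prod := by
  induction t using Multiset.induction_on with
  | empty => simp
  | cons a t ih =>
    simp only [card_cons, map_cons, prod_cons, pow_succ']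
    have h1 : m ≤ Complex.abs a := ht a (mem_cons_self a t)
    have h2 : m ^ (Multiset.card t) ≤ (t.map Complex.abs).prod :=
      ih (fun z hz => ht z (mem_cons_of_mem hz))
    have := Multiset.prod_nonneg (s := t.map Complex.abs)
      (fun x hx => by obtain ⟨z, _, rfl⟩ := Multiset.mem_map.mp hx; positivity)
    exact mul_le_mul h1 h2 (by positivity) (by positivity)

lemma multiset_sum_le_card_mul {b : ℝ} (s : Multiset ℝ) (h : ∀ x ∈ s, x ≤ b) :
    s.sum ≤ (Multiset.card s) * b := by
  induction s using Multiset.induction_on with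
  | empty => simp
  | cons a t ih =>
    simp only [Multiset.sum_cons, Multiset.card_cons]
    have h1 : a ≤ b := h a (Multiset.mem_cons_self a t)
    have h2 : t.sum ≤ (Multiset.card t) * b := ih (fun x hx => h x (Multiset.mem_cons_of_mem hx))
    push_cast
    nlinarith [h1, h2]

lemma multiset_prod_abs (s : Multiset ℂ) :
    Complex.abs s.prod = (s.map Complex.abs).prod := by
  induction s using Multiset.induction_on with
  | empty => simp
  | cons a t ih => simp [ih]

lemma exists_small_root (f : Polynomial ℂ) {k : ℕ} (hk : k ≠ 0) (hck : f.coeff k ≠ 0) :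
    ∃ y : ℂ, f.IsRoot y ∧
      Complex.abs (f.coeff k) * Complex.abs y ^ k
        ≤ 2 ^ f.natDegree * Complex.abs (f.coeff 0) := by
  have hf : f ≠ 0 := fun h => hck (by simp [h])
  set d := f.natDegree with hd
  have hkd : k ≤ d := le_natDegree_of_ne_zero hck
  have hcard : Multiset.card f.roots = d :=
    splits_iff_card_roots.mp (IsAlgClosed.splits f)
  have hroots_ne : f.roots ≠ 0 := by
    intro h; rw [h] at hcard; simp at hcard; omega
  obtain ⟨y₀, hy₀mem, hy₀min⟩ := multiset_exists_min_abs f.roots hroots_ne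
  have hy₀root : f.IsRoot y₀ := (Polynomial.mem_roots hf).mp hy₀mem
  set m := Complex.abs y₀ with hm
  have hm0 : 0 ≤ m := by positivity
  refine ⟨y₀, hy₀root, ?_⟩
  set P : ℝ := (f.roots.map Complex.abs).prod with hP
  have hPnn : 0 ≤ P := Multiset.prod_nonneg
    (fun x hx => by obtain ⟨z, _, rfl⟩ := Multiset.mem_map.mp hx; positivity)
  -- coeff 0
  have hfe := Polynomial.C_leadingCoeff_mul_prod_multiset_X_sub_C hcard
  have hc0 : Complex.abs (f.coeff 0) = Complex.abs f.leadingCoeff * P := by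
    have he0 : f.eval 0 = f.leadingCoeff * (f.roots.map (fun r => -r)).prod := by
      conv_lhs => rw [← hfe]
      rw [Polynomial.eval_mul, Polynomial.eval_C, Polynomial.eval_multiset_prod,
        Multiset.map_map]
      congr 1
      apply congrArg Multiset.prod
      apply Multiset.map_congr rfl
      intro r _
      simp
    rw [Polynomial.coeff_zero_eq_eval_zero, he0, map_mul]
    congr 1
    rw [multiset_prod_abs, Multiset.map_map]
    congr 1
    apply Multiset.map_congr rfl
    intro r _
    simp
  -- coeff k bound
  have hckb : Complex.abs (f.coeff k) * m ^ k
      ≤ (d.choose (d - k)) * (Complex.abs f.leadingCoeff * P) := by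
    have hkk := Polynomial.coeff_eq_esymm_roots_of_card hcard hkd
    have habs : Complex.abs (f.coeff k)
        = Complex.abs f.leadingCoeff * Complex.abs (f.roots.esymm (d - k)) := by
      have hneg : Complex.abs (-1 : ℂ) = 1 := by simp
      rw [hkk, map_mul, map_mul, map_pow, hneg, one_pow, mul_one]
    rw [habs]
    have hterm : ∀ S ∈ f.roots.powersetCard (d - k),
        Complex.abs S.prod * m ^ k ≤ P := by
      intro S hS
      obtain ⟨hSle, hScard⟩ := Multiset.mem_powersetCard.mp hS
      have hsub : S + (f.roots - S) = f.roots := by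
        rw [add_comm]; exact tsub_add_cancel_of_le hSle
      have hcard2 : Multiset.card (f.roots - S) = k := by
        have := congrArg Multiset.card hsub
        simp only [Multiset.card_add] at this
        omega
      have h1 : m ^ k ≤ ((f.roots - S).map Complex.abs).prod := by
        rw [← hcard2]
        apply multiset_pow_le_prod hm0
        intro z hz
        exact hy₀min z (Multiset.mem_of_le tsub_le_self hz)
      have h2 : (S.map Complex.abs).prod * ((f.roots - S).map Complex.abs).prod = P := by
        rw [← Multiset.prod_add, ← Multiset.map_add, hsub]
      rw [multiset_prod_abs, ← h2]
      have hSnn : 0 ≤ (S.map Complex.abs).prod := Multiset.prod_nonneg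
        (fun x hx => by obtain ⟨z, _, rfl⟩ := Multiset.mem_map.mp hx; positivity)
      exact mul_le_mul_of_nonneg_left h1 hSnn
    -- sum bound
    have hsum : Complex.abs (f.roots.esymm (d - k)) * m ^ k
        ≤ (d.choose (d - k)) * P := by
      rcases eq_or_lt_of_le hm0 with hm0' | hm0'
      · rcases Nat.exists_eq_succ_of_ne_zero hk with ⟨k', rfl⟩
        rw [← hm0', zero_pow hk, mul_zero]
        positivity
      · have habs2 : Complex.abs (f.roots.esymm (d - k))
            ≤ ((f.roots.powersetCard (d - k)).map (fun S => Complex.abs S.prod)).sum := by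
          rw [Multiset.esymm]
          refine (multiset_abs_sum_le _).trans ?_
          rw [Multiset.map_map]
          rfl
        have hsum2 : ((f.roots.powersetCard (d - k)).map (fun S => Complex.abs S.prod)).sum
            ≤ (Multiset.card (f.roots.powersetCard (d - k))) * (P / m ^ k) := by
          have : Multiset.card (f.roots.powersetCard (d - k)) =
              Multiset.card ((f.roots.powersetCard (d - k)).map (fun S => Complex.abs S.prod)) := by
            rw [Multiset.card_map]
          rw [this]
          apply multiset_sum_le_card_mul
          intro x hx
          obtain ⟨S, hS, rfl⟩ := Multiset.mem_map.mp hx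
          rw [le_div_iff₀ (by positivity)]
          exact hterm S hS
        have hcard3 : Multiset.card (f.roots.powersetCard (d - k)) = d.choose (d - k) := by
          rw [Multiset.card_powersetCard, hcard]
        calc Complex.abs (f.roots.esymm (d - k)) * m ^ k
            ≤ ((Multiset.card (f.roots.powersetCard (d - k))) * (P / m ^ k)) * m ^ k := by
              apply mul_le_mul_of_nonneg_right (habs2.trans hsum2) (by positivity)
          _ = (d.choose (d - k)) * P := by
              rw [hcard3, mul_assoc,
                div_mul_cancel₀ _ (by positivity : (m:ℝ) ^ k ≠ 0)]
    calc Complex.abs f.leadingCoeff * Complex.abs (f.roots.esymm (d - k)) * m ^ k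
        = Complex.abs f.leadingCoeff * (Complex.abs (f.roots.esymm (d - k)) * m ^ k) := by ring
      _ ≤ Complex.abs f.leadingCoeff * ((d.choose (d - k)) * P) :=
          mul_le_mul_of_nonneg_left hsum (by positivity)
      _ = (d.choose (d - k)) * (Complex.abs f.leadingCoeff * P) := by ring
  -- choose bound
  have hchoose : (d.choose (d - k) : ℝ) ≤ 2 ^ d := by
    have h1 : d.choose (d - k) ≤ 2 ^ d := by
      rw [← Nat.sum_range_choose d]
      exact Finset.single_le_sum (f := fun i => d.choose i)
        (fun i _ => Nat.zero_le _) (Finset.mem_range.mpr (by omega))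
    exact_mod_cast h1
  rw [hc0]
  calc Complex.abs (f.coeff k) * m ^ k
      ≤ (d.choose (d - k)) * (Complex.abs f.leadingCoeff * P) := hckb
    _ ≤ 2 ^ d * (Complex.abs f.leadingCoeff * P) := by
        apply mul_le_mul_of_nonneg_right hchoose (by positivity)

lemma xcoord_inj {δ : ℝ} (hδ : 0 < δ) :
    Function.Injective (fun n : ℕ => ((δ / (n + 2) : ℝ) : ℂ)) := by
  intro m n hmn
  simp only [Complex.ofReal_inj] at hmn
  have hm : (0:ℝ) < m + 2 := by positivity
  have hn : (0:ℝ) < n + 2 := by positivity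
  rw [div_eq_div_iff (ne_of_gt hm) (ne_of_gt hn)] at hmn
  have h3 : δ * ((m:ℝ) + 2) = δ * ((n:ℝ) + 2) := by ring_nf; ring_nf at hmn; linarith
  have h4 := mul_left_cancel₀ (ne_of_gt hδ) h3
  have : (m : ℝ) = n := by linarith
  exact_mod_cast this

lemma xcoord_lt {δ : ℝ} (hδ : 0 < δ) (n : ℕ) :
    Complex.abs ((δ / (n + 2) : ℝ) : ℂ) < δ := by
  rw [Complex.abs_ofReal, abs_of_pos (by positivity)]
  rw [div_lt_iff₀ (by positivity)]
  nlinarith [hδ]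

lemma evB_zero_zero (q : BB) : evB 0 0 q = (q.coeff 0).eval 0 := by
  rw [evB_apply, ← Polynomial.coeff_zero_eq_eval_zero, Polynomial.coeff_map,
    ← Polynomial.coeff_zero_eq_eval_zero]
  simp [Polynomial.evalRingHom, Polynomial.coeff_zero_eq_eval_zero]

lemma infinite_zeros (q : BB) (hq0 : evB 0 0 q = 0) {V : Set (ℂ × ℂ)}
    (hV : IsOpen V) (h0V : ((0 : ℂ), (0 : ℂ)) ∈ V) :
    {z : ℂ × ℂ | z ∈ V ∧ evB z.1 z.2 q = 0}.Infinite := by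
  obtain ⟨ε, hε, hball⟩ := Metric.isOpen_iff.mp hV _ h0V
  by_cases hA : q.map (Polynomial.evalRingHom (0 : ℂ)) = 0
  · -- vertical line of zeros
    apply Set.infinite_of_injective_forall_mem
      (f := fun n : ℕ => (((0:ℂ)), ((ε / (n + 2) : ℝ) : ℂ)))
    · intro m n hmn
      exact xcoord_inj hε (congrArg Prod.snd hmn)
    · intro n
      constructor
      · apply hball
        rw [Metric.mem_ball, Prod.dist_eq]
        apply max_lt
        · simpa using hε
        · simpa [Complex.dist_eq] using xcoord_lt hε n
      · rw [evB_apply, hA]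
        simp
  · -- main case
    have hex : ∃ k, k ≠ 0 ∧ (q.coeff k).eval 0 ≠ 0 := by
      by_contra hcon
      push_neg at hcon
      apply hA
      ext j
      rw [Polynomial.coeff_map]
      rcases eq_or_ne j 0 with rfl | hj
      · rw [evB_zero_zero, ← Polynomial.coeff_zero_eq_eval_zero] at hq0
        simpa [Polynomial.evalRingHom] using hq0
      · have := hcon j hj
        rw [← Polynomial.coeff_zero_eq_eval_zero] at this
        simpa [Polynomial.evalRingHom] using this
    obtain ⟨k, hk, hck⟩ := hex
    set c0 := q.coeff 0 with hc0def
    set ck := q.coeff k with hckdef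
    set D := q.natDegree with hD
    have hGcont : ContinuousAt
        (fun x : ℂ => (2 ^ D * Complex.abs (c0.eval x)) / Complex.abs (ck.eval x)) 0 := by
      apply ContinuousAt.div
      · exact (continuous_const.mul (Complex.continuous_abs.comp c0.continuous)).continuousAt
      · exact (Complex.continuous_abs.comp ck.continuous).continuousAt
      · simpa using hck
    have hG0 : (2 ^ D * Complex.abs (c0.eval 0)) / Complex.abs (ck.eval 0) = 0 := by
      rw [evB_zero_zero] at hq0
      rw [← hc0def] at hq0
      rw [hq0]
      simp
    have hεk : (0:ℝ) < ε ^ k := by positivity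
    have hev : ∀ᶠ x in nhds (0:ℂ),
        (2 ^ D * Complex.abs (c0.eval x)) / Complex.abs (ck.eval x) < ε ^ k ∧
          ck.eval x ≠ 0 := by
      apply Filter.Eventually.and
      · exact hGcont.eventually_lt_const (by
          show (2 ^ D * Complex.abs (c0.eval 0)) / Complex.abs (ck.eval 0) < ε ^ k
          rw [hG0]; exact hεk)
      · exact (ck.continuous.continuousAt).eventually_ne hck
    obtain ⟨δ', hδ', hδball⟩ := Metric.eventually_nhds_iff_ball.mp hev
    set δ := min δ' ε with hδdef
    have hδpos : 0 < δ := lt_min hδ' hε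
    have key : ∀ n : ℕ, ∃ y : ℂ, evB ((δ / (n + 2) : ℝ) : ℂ) y q = 0 ∧ Complex.abs y < ε := by
      intro n
      set x : ℂ := ((δ / (n + 2) : ℝ) : ℂ) with hx
      have hxball : x ∈ Metric.ball (0:ℂ) δ' := by
        rw [Metric.mem_ball, Complex.dist_eq, sub_zero]
        exact lt_of_lt_of_le (xcoord_lt hδpos n) (min_le_left _ _)
      obtain ⟨hGx, hckx⟩ := hδball x hxball
      set fx := q.map (Polynomial.evalRingHom x) with hfx
      have hcoef : fx.coeff k = ck.eval x := by
        rw [hfx, Polynomial.coeff_map]; rfl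
      have hcoef0 : fx.coeff 0 = c0.eval x := by
        rw [hfx, Polynomial.coeff_map]; rfl
      have hckx' : fx.coeff k ≠ 0 := by rw [hcoef]; exact hckx
      obtain ⟨y, hyroot, hybound⟩ := exists_small_root fx hk hckx'
      refine ⟨y, ?_, ?_⟩
      · rw [evB_apply]; exact hyroot
      · -- |y| < ε
        have hD' : fx.natDegree ≤ D := Polynomial.natDegree_map_le
        have h2 : (2:ℝ) ^ fx.natDegree ≤ 2 ^ D := by
          apply pow_le_pow_right₀ (by norm_num) hD'
        have habs : Complex.abs (fx.coeff k) * Complex.abs y ^ k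
            ≤ 2 ^ D * Complex.abs (c0.eval x) := by
          refine hybound.trans ?_
          rw [hcoef0]
          apply mul_le_mul_of_nonneg_right h2 (by positivity)
        rw [hcoef] at habs
        have hyk : Complex.abs y ^ k < ε ^ k := by
          have hckpos : 0 < Complex.abs (ck.eval x) := by
            simpa [AbsoluteValue.pos_iff] using hckx
          rw [div_lt_iff₀ hckpos] at hGx
          have h5 : Complex.abs (ck.eval x) * Complex.abs y ^ k
              < ε ^ k * Complex.abs (ck.eval x) := lt_of_le_of_lt habs hGx
          rw [mul_comm] at h5
          have h6 : Complex.abs y ^ k * Complex.abs (ck.eval x)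
              < ε ^ k * Complex.abs (ck.eval x) := by linarith
          exact lt_of_mul_lt_mul_right h6 hckpos.le
        by_contra hyc
        push_neg at hyc
        exact absurd hyk (not_lt.mpr (pow_le_pow_left₀ (by positivity) hyc k))
    choose Y hY1 hY2 using key
    apply Set.infinite_of_injective_forall_mem
      (f := fun n : ℕ => ((((δ / (n + 2) : ℝ) : ℂ)), Y n))
    · intro m n hmn
      exact xcoord_inj hδpos (congrArg Prod.fst hmn)
    · intro n
      refine ⟨hball ?_, hY1 n⟩
      rw [Metric.mem_ball, Prod.dist_eq]
      apply max_lt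
      · simp only [Complex.dist_eq, sub_zero]
        exact lt_of_lt_of_le (xcoord_lt hδpos n) (min_le_right _ _)
      · simpa [Complex.dist_eq] using hY2 n

lemma evB_C (a b : ℂ) (c : Polynomial ℂ) : evB a b (Polynomial.C c) = c.eval a := by
  simp [evB_apply]

abbrev KK := FractionRing (Polynomial ℂ)

lemma finite_x_coords {p q : BB} (hp : p ≠ 0) (hq : q ≠ 0) (hrel : IsRelPrime p q) :
    ∃ r : Polynomial ℂ, r ≠ 0 ∧
      ∀ a b : ℂ, evB a b p = 0 → evB a b q = 0 → r.eval a = 0 := by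
  classical
  set φ : Polynomial ℂ →+* KK := algebraMap (Polynomial ℂ) KK with hφ
  have hφinj : Function.Injective φ := IsFractionRing.injective _ _
  have hpb0 : p.map φ ≠ 0 := by
    rw [Ne, Polynomial.map_eq_zero_iff hφinj]; exact hp
  have hqb0 : q.map φ ≠ 0 := by
    rw [Ne, Polynomial.map_eq_zero_iff hφinj]; exact hq
  have hcop : IsCoprime (p.map φ) (q.map φ) := by
    by_contra hnc
    set g := EuclideanDomain.gcd (p.map φ) (q.map φ) with hg
    have hgdl : g ∣ p.map φ := EuclideanDomain.gcd_dvd_left _ _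
    have hgdr : g ∣ q.map φ := EuclideanDomain.gcd_dvd_right _ _
    have hgunit : ¬IsUnit g := by
      intro hu
      apply hnc
      obtain ⟨u, hu'⟩ := hu
      have hbez := EuclideanDomain.gcd_eq_gcd_ab (p.map φ) (q.map φ)
      refine ⟨(↑u⁻¹ : KK[X]) * EuclideanDomain.gcdA (p.map φ) (q.map φ),
              (↑u⁻¹ : KK[X]) * EuclideanDomain.gcdB (p.map φ) (q.map φ), ?_⟩
      have hui : (↑u⁻¹ : KK[X]) * g = 1 := by
        rw [← hu']; exact u.inv_mul
      calc (↑u⁻¹ : KK[X]) * EuclideanDomain.gcdA (p.map φ) (q.map φ) * (p.map φ)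
            + (↑u⁻¹ : KK[X]) * EuclideanDomain.gcdB (p.map φ) (q.map φ) * (q.map φ)
          = (↑u⁻¹ : KK[X]) * ((p.map φ) * EuclideanDomain.gcdA (p.map φ) (q.map φ)
            + (q.map φ) * EuclideanDomain.gcdB (p.map φ) (q.map φ)) := by ring
        _ = (↑u⁻¹ : KK[X]) * g := by rw [← hbez]
        _ = 1 := hui
    have hg0 : g ≠ 0 := by
      intro h0
      exact hpb0 ((EuclideanDomain.gcd_eq_zero_iff.mp h0).1)
    obtain ⟨s, hs⟩ := IsLocalization.integerNormalization_map_to_map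
      (nonZeroDivisors (Polynomial ℂ)) g
    set g₀ := IsLocalization.integerNormalization (nonZeroDivisors (Polynomial ℂ)) g with hg₀
    have hs0 : (s : Polynomial ℂ) ≠ 0 := mem_nonZeroDivisors_iff_ne_zero.mp s.2
    have hφs0 : φ (s : Polynomial ℂ) ≠ 0 := by
      rw [Ne, IsFractionRing.to_map_eq_zero_iff]; exact hs0
    have hsmap : g₀.map φ = Polynomial.C (φ (s : Polynomial ℂ)) * g := by
      rw [hs, Algebra.smul_def]
      congr 1
    have hg₀0 : g₀ ≠ 0 := by
      intro h0
      rw [h0, Polynomial.map_zero] at hsmap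
      exact hg0 (by
        rcases mul_eq_zero.mp hsmap.symm with h | h
        · exact absurd h (by simp [Polynomial.C_eq_zero, hφs0])
        · exact h)
    set gp := g₀.primPart with hgp
    have hcontent0 : g₀.content ≠ 0 := by
      rw [Ne, Polynomial.content_eq_zero_iff]; exact hg₀0
    have hφc0 : φ g₀.content ≠ 0 := by
      rw [Ne, IsFractionRing.to_map_eq_zero_iff]; exact hcontent0
    have hCunit : IsUnit (Polynomial.C (φ g₀.content)) :=
      Polynomial.isUnit_C.mpr (isUnit_iff_ne_zero.mpr hφc0)
    have hCsunit : IsUnit (Polynomial.C (φ (s : Polynomial ℂ))) :=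
      Polynomial.isUnit_C.mpr (isUnit_iff_ne_zero.mpr hφs0)
    have hgpmap : Polynomial.C (φ g₀.content) * gp.map φ
        = Polynomial.C (φ (s : Polynomial ℂ)) * g := by
      rw [← hsmap]
      conv_rhs => rw [g₀.eq_C_content_mul_primPart]
      rw [Polynomial.map_mul, Polynomial.map_C]
    have hdvd_g_gp : g ∣ gp.map φ := by
      have h1 : g ∣ Polynomial.C (φ g₀.content) * gp.map φ := by
        rw [hgpmap]; exact dvd_mul_left g _
      exact (hCunit.dvd_mul_left).mp h1
    have hdvd_gp_g : gp.map φ ∣ g := by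
      have h1 : gp.map φ ∣ Polynomial.C (φ (s : Polynomial ℂ)) * g := by
        rw [← hgpmap]; exact dvd_mul_left _ _
      exact (hCsunit.dvd_mul_left).mp h1
    have hdiv : ∀ t : BB, t ≠ 0 → g ∣ t.map φ → gp ∣ t := by
      intro t ht hgt
      have htc0 : φ t.content ≠ 0 := by
        rw [Ne, IsFractionRing.to_map_eq_zero_iff, Polynomial.content_eq_zero_iff]
        exact ht
      have htCunit : IsUnit (Polynomial.C (φ t.content)) :=
        Polynomial.isUnit_C.mpr (isUnit_iff_ne_zero.mpr htc0)
      have h1 : g ∣ (t.primPart).map φ := by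
        have h2 : g ∣ Polynomial.C (φ t.content) * (t.primPart).map φ := by
          have : t.map φ = Polynomial.C (φ t.content) * (t.primPart).map φ := by
            conv_lhs => rw [t.eq_C_content_mul_primPart]
            rw [Polynomial.map_mul, Polynomial.map_C]
          rw [← this]; exact hgt
        exact (htCunit.dvd_mul_left).mp h2
      have h3 : gp.map φ ∣ (t.primPart).map φ := hdvd_gp_g.trans h1
      have h4 : gp ∣ t.primPart :=
        ((g₀.isPrimitive_primPart.dvd_iff_fraction_map_dvd_fraction_map
          (K := KK) (q := t.primPart)).mpr h3)
      exact h4.trans t.primPart_dvd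
    have hgpunit : IsUnit gp := hrel (hdiv p hp hgdl) (hdiv q hq hgdr)
    apply hgunit
    have hmapunit : IsUnit (gp.map φ) := by
      have := hgpunit.map (Polynomial.mapRingHom φ)
      simpa using this
    exact isUnit_of_dvd_unit hdvd_g_gp hmapunit
  obtain ⟨a, b, hab⟩ := hcop
  obtain ⟨sa, hsa⟩ := IsLocalization.integerNormalization_map_to_map
    (nonZeroDivisors (Polynomial ℂ)) a
  obtain ⟨sb, hsb⟩ := IsLocalization.integerNormalization_map_to_map
    (nonZeroDivisors (Polynomial ℂ)) b
  set A := IsLocalization.integerNormalization (nonZeroDivisors (Polynomial ℂ)) a with hA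
  set B := IsLocalization.integerNormalization (nonZeroDivisors (Polynomial ℂ)) b with hB
  have hsa0 : (sa : Polynomial ℂ) ≠ 0 := mem_nonZeroDivisors_iff_ne_zero.mp sa.2
  have hsb0 : (sb : Polynomial ℂ) ≠ 0 := mem_nonZeroDivisors_iff_ne_zero.mp sb.2
  have hsa' : A.map φ = Polynomial.C (φ (sa : Polynomial ℂ)) * a := by
    rw [hsa, Algebra.smul_def]; congr 1
  have hsb' : B.map φ = Polynomial.C (φ (sb : Polynomial ℂ)) * b := by
    rw [hsb, Algebra.smul_def]; congr 1
  have key : Polynomial.C (sb : Polynomial ℂ) * A * p + Polynomial.C (sa : Polynomial ℂ) * B * q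
      = Polynomial.C ((sa : Polynomial ℂ) * (sb : Polynomial ℂ)) := by
    apply Polynomial.map_injective φ hφinj
    rw [Polynomial.map_add, Polynomial.map_mul, Polynomial.map_mul, Polynomial.map_mul,
      Polynomial.map_mul, Polynomial.map_C, Polynomial.map_C, hsa', hsb']
    calc Polynomial.C (φ (sb : Polynomial ℂ)) * (Polynomial.C (φ (sa : Polynomial ℂ)) * a) * p.map φ
          + Polynomial.C (φ (sa : Polynomial ℂ)) * (Polynomial.C (φ (sb : Polynomial ℂ)) * b) * q.map φ
        = (Polynomial.C (φ (sa : Polynomial ℂ)) * Polynomial.C (φ (sb : Polynomial ℂ)))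
          * (a * p.map φ + b * q.map φ) := by ring
      _ = Polynomial.C (φ (sa : Polynomial ℂ)) * Polynomial.C (φ (sb : Polynomial ℂ)) := by
          rw [hab, mul_one]
      _ = Polynomial.map φ (Polynomial.C ((sa : Polynomial ℂ) * (sb : Polynomial ℂ))) := by
          rw [Polynomial.map_C, map_mul, Polynomial.C_mul]
  refine ⟨(sa : Polynomial ℂ) * (sb : Polynomial ℂ), mul_ne_zero hsa0 hsb0, ?_⟩
  intro x y hpx hqx
  have hk := congrArg (evB x y) key
  rw [_root_.map_add, _root_.map_mul, _root_.map_mul, _root_.map_mul, _root_.map_mul, hpx, hqx, mul_zero, mul_zero,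
    add_zero, evB_C] at hk
  simpa using hk

def swapB : BB →+* BB :=
  Polynomial.eval₂RingHom
    (Polynomial.eval₂RingHom ((Polynomial.C).comp (Polynomial.C)) (Polynomial.X : BB))
    (Polynomial.C Polynomial.X)

lemma evB_swap (a b : ℂ) (f : BB) : evB a b (swapB f) = evB b a f := by
  have h : (evB a b).comp swapB = evB b a := by
    apply Polynomial.ringHom_ext
    · intro c
      have hinner : ((evB a b).comp swapB).comp (Polynomial.C : Polynomial ℂ →+* BB)
          = ((evB b a)).comp (Polynomial.C : Polynomial ℂ →+* BB) := by
        apply Polynomial.ringHom_ext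
        · intro r; simp [swapB, evB_apply]
        · simp [swapB, evB_apply]
      calc (evB a b) (swapB (Polynomial.C c)) = (((evB a b).comp swapB).comp Polynomial.C) c := rfl
        _ = ((evB b a).comp Polynomial.C) c := by rw [hinner]
        _ = (evB b a) (Polynomial.C c) := rfl
    · simp [swapB, evB_apply]
  calc evB a b (swapB f) = ((evB a b).comp swapB) f := rfl
    _ = evB b a f := by rw [h]

lemma swap_swap (f : BB) : swapB (swapB f) = f := by
  have h : swapB.comp swapB = RingHom.id BB := by
    apply Polynomial.ringHom_ext
    · intro c
      have hinner : (swapB.comp swapB).comp (Polynomial.C : Polynomial ℂ →+* BB)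
          = (RingHom.id BB).comp (Polynomial.C : Polynomial ℂ →+* BB) := by
        apply Polynomial.ringHom_ext
        · intro r; simp [swapB]
        · simp [swapB]
      calc swapB (swapB (Polynomial.C c)) = ((swapB.comp swapB).comp Polynomial.C) c := rfl
        _ = ((RingHom.id BB).comp Polynomial.C) c := by rw [hinner]
        _ = Polynomial.C c := rfl
    · simp [swapB]
  calc swapB (swapB f) = (swapB.comp swapB) f := rfl
    _ = f := by rw [h]; rfl

lemma finite_common_zeros {p q : BB} (hp : p ≠ 0) (hq : q ≠ 0) (hrel : IsRelPrime p q) :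
    {z : ℂ × ℂ | evB z.1 z.2 p = 0 ∧ evB z.1 z.2 q = 0}.Finite := by
  obtain ⟨r, hr0, hr⟩ := finite_x_coords hp hq hrel
  have hsp : swapB p ≠ 0 := fun h => hp (by rw [← swap_swap p, h, _root_.map_zero])
  have hsq : swapB q ≠ 0 := fun h => hq (by rw [← swap_swap q, h, _root_.map_zero])
  have hrel' : IsRelPrime (swapB p) (swapB q) := by
    intro d hdp hdq
    have h1 : swapB d ∣ p := by
      obtain ⟨c, hc⟩ := hdp
      refine ⟨swapB c, ?_⟩
      have := congrArg swapB hc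
      rwa [swap_swap, _root_.map_mul] at this
    have h2 : swapB d ∣ q := by
      obtain ⟨c, hc⟩ := hdq
      refine ⟨swapB c, ?_⟩
      have := congrArg swapB hc
      rwa [swap_swap, _root_.map_mul] at this
    have h3 := hrel h1 h2
    have h4 := h3.map swapB
    rwa [swap_swap] at h4
  obtain ⟨r2, hr20, hr2⟩ := finite_x_coords hsp hsq hrel'
  apply Set.Finite.subset
    (Set.Finite.prod (Polynomial.finite_setOf_isRoot hr0) (Polynomial.finite_setOf_isRoot hr20))
  rintro ⟨x, y⟩ ⟨h1, h2⟩
  constructor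
  · exact hr x y h1 h2
  · refine hr2 y x ?_ ?_
    · rw [evB_swap]; exact h1
    · rw [evB_swap]; exact h2

lemma eq_on_open {d p' q' : BB} (hd : d ≠ 0) {U : Set (ℂ × ℂ)} (hU : IsOpen U)
    {h : ℂ × ℂ → ℂ} (hcont : ContinuousOn h U)
    (heq : ∀ z ∈ U, evB z.1 z.2 d * evB z.1 z.2 p'
      = h z * (evB z.1 z.2 d * evB z.1 z.2 q'))
    {z₀ : ℂ × ℂ} (hz₀ : z₀ ∈ U) : evB z₀.1 z₀.2 p' = h z₀ * evB z₀.1 z₀.2 q' := by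
  obtain ⟨R, hR, hRU⟩ := Metric.isOpen_iff.mp hU z₀ hz₀
  have key : ∀ n : ℕ, ∃ z : ℂ × ℂ,
      z ∈ Metric.ball z₀ (min R (1 / (n + 1))) ∧ evB z.1 z.2 d ≠ 0 := by
    intro n
    obtain ⟨z, hz, hzd⟩ := evB_dense hd z₀ (r := min R (1 / (n + 1))) (lt_min hR (by positivity))
    exact ⟨z, hz, hzd⟩
  choose Z hZball hZd using key
  have hZdist : ∀ n : ℕ, dist (Z n) z₀ < 1 / (n + 1) := by
    intro n
    exact lt_of_lt_of_le (Metric.mem_ball.mp (hZball n)) (min_le_right _ _)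
  have hZU : ∀ n, Z n ∈ U := fun n =>
    hRU (Metric.ball_subset_ball (min_le_left _ _) (hZball n))
  have hZtend : Filter.Tendsto Z Filter.atTop (nhds z₀) := by
    rw [Metric.tendsto_atTop]
    intro ε hε
    obtain ⟨N, hN⟩ := exists_nat_one_div_lt hε
    refine ⟨N, fun n hn => ?_⟩
    refine lt_of_lt_of_le (hZdist n) (le_trans ?_ (le_of_lt hN))
    apply one_div_le_one_div_of_le (by positivity)
    push_cast
    linarith [(Nat.cast_le (α := ℝ)).mpr hn]
  have hEq : ∀ n, evB (Z n).1 (Z n).2 p' = h (Z n) * evB (Z n).1 (Z n).2 q' := by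
    intro n
    have h1 := heq (Z n) (hZU n)
    have h2 : evB (Z n).1 (Z n).2 d * evB (Z n).1 (Z n).2 p'
        = evB (Z n).1 (Z n).2 d * (h (Z n) * evB (Z n).1 (Z n).2 q') := by
      rw [h1]; ring
    exact mul_left_cancel₀ (hZd n) h2
  have h1 : Filter.Tendsto (fun n => evB (Z n).1 (Z n).2 p') Filter.atTop
      (nhds (evB z₀.1 z₀.2 p')) :=
    ((evB_continuous p').tendsto z₀).comp hZtend
  have hZtendW : Filter.Tendsto Z Filter.atTop (nhdsWithin z₀ U) :=
    tendsto_nhdsWithin_iff.mpr ⟨hZtend, Filter.Eventually.of_forall hZU⟩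
  have h2 : Filter.Tendsto (fun n => h (Z n) * evB (Z n).1 (Z n).2 q') Filter.atTop
      (nhds (h z₀ * evB z₀.1 z₀.2 q')) := by
    apply Filter.Tendsto.mul
    · exact (hcont z₀ hz₀).tendsto.comp hZtendW
    · exact ((evB_continuous q').tendsto z₀).comp hZtend
  have h1' : Filter.Tendsto (fun n => evB (Z n).1 (Z n).2 p') Filter.atTop
      (nhds (h z₀ * evB z₀.1 z₀.2 q')) := by
    apply h2.congr
    intro n
    exact (hEq n).symm
  exact tendsto_nhds_unique h1 h1'

theorem main_BB (p q : BB) (U : Set (ℂ × ℂ)) (hU : IsOpen U)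
    (h0U : ((0 : ℂ), (0 : ℂ)) ∈ U)
    (h : ℂ × ℂ → ℂ) (hcont : ContinuousOn h U)
    (heq : ∀ z ∈ U, evB z.1 z.2 p = h z * evB z.1 z.2 q) :
    ∃ f pt qt : BB, p = f * pt ∧ q = f * qt ∧ evB 0 0 qt ≠ 0 := by
  rcases eq_or_ne q 0 with rfl | hq
  · have hp0 : p = 0 := by
      obtain ⟨R, hR, hRU⟩ := Metric.isOpen_iff.mp hU _ h0U
      apply eq_zero_of_ball p ((0 : ℂ), (0 : ℂ)) hR
      intro z hz
      rw [heq z (hRU hz)]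
      simp
    exact ⟨0, 0, 1, by simp [hp0], by simp, by simp⟩
  rcases eq_or_ne p 0 with rfl | hp
  · exact ⟨q, 0, 1, by simp, by simp, by simp⟩
  obtain ⟨p', q', d, hrel, hdp, hdq⟩ :=
    UniqueFactorizationMonoid.exists_reduced_factors p hp q
  have hd0 : d ≠ 0 := fun h0 => hp (by rw [← hdp, h0, zero_mul])
  by_cases hqt : evB 0 0 q' = 0
  swap
  · exact ⟨d, p', q', hdp.symm, hdq.symm, hqt⟩
  exfalso
  have hq'0 : q' ≠ 0 := fun h0 => hq (by rw [← hdq, h0, mul_zero])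
  have hp'0 : p' ≠ 0 := fun h0 => hp (by rw [← hdp, h0, mul_zero])
  have heq' : ∀ z ∈ U, evB z.1 z.2 p' = h z * evB z.1 z.2 q' := by
    intro z hz
    refine eq_on_open hd0 hU hcont (fun w hw => ?_) hz
    have h1 := heq w hw
    rw [← hdp, ← hdq, _root_.map_mul, _root_.map_mul] at h1
    exact h1
  have hinf := infinite_zeros q' hqt hU h0U
  have hsub : {z : ℂ × ℂ | z ∈ U ∧ evB z.1 z.2 q' = 0}
      ⊆ {z : ℂ × ℂ | evB z.1 z.2 p' = 0 ∧ evB z.1 z.2 q' = 0} := by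
    rintro z ⟨hzU, hzq⟩
    exact ⟨by rw [heq' z hzU, hzq, mul_zero], hzq⟩
  exact hinf (Set.Finite.subset (finite_common_zeros hp'0 hq'0 hrel) hsub)

end AuxForStmt0

open MvPolynomial

/-- If `P/Q` is analytic near the origin (with `Q(0,0) = 0`), then `P` and `Q`
have a common polynomial factor `F` with `P = F·P̃`, `Q = F·Q̃`, `Q̃(0,0) ≠ 0`. -/
theorem stmt0 (P Q : MvPolynomial (Fin 2) ℂ)
    (hQ0 : eval ![0, 0] Q = 0)
    (hanal : ∃ U : Set (ℂ × ℂ), IsOpen U ∧ (0, 0) ∈ U ∧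
      ∃ h : ℂ × ℂ → ℂ, AnalyticOnNhd ℂ h U ∧
        ∀ z ∈ U, eval ![z.1, z.2] P = h z * eval ![z.1, z.2] Q) :
    ∃ F Pt Qt : MvPolynomial (Fin 2) ℂ,
      P = F * Pt ∧ Q = F * Qt ∧ eval ![0, 0] Qt ≠ 0 := by
  obtain ⟨U, hU, h0U, h, hanal', heq⟩ := hanal
  have heqB : ∀ z ∈ U, evB z.1 z.2 (eAB P) = h z * evB z.1 z.2 (eAB Q) := by
    intro z hz
    rw [← eval_eq_evB, ← eval_eq_evB]
    exact heq z hz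
  obtain ⟨f, pt, qt, hpf, hqf, hqt⟩ :=
    main_BB (eAB P) (eAB Q) U hU h0U h hanal'.continuousOn heqB
  refine ⟨gBA f, gBA pt, gBA qt, ?_, ?_, ?_⟩
  · have h1 := congrArg gBA hpf
    rwa [gBA_eAB, _root_.map_mul] at h1
  · have h1 := congrArg gBA hqf
    rwa [gBA_eAB, _root_.map_mul] at h1
  · rw [eval_eq_evB, eAB_gBA]
    exact hqt
end

section
/- Let B(x,y) ∈ ℂ[x,y] be a polynomial satisfying B(x,y) = B(−x,y) = B(x,−y) for all x,y. Suppose B = F·P with F(0,0) = 0 and P(0,0) ≠ 0, where moreover F has no nontrivial polynomial factor with nonzero constant term. Then F(x,y) = F(−x,y) = F(x,−y), i.e., F is even in each variable, and hence F(x,y) = F̃(x²,y²) for some polynomial F̃. -/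
/-!
Let `ρ` negate one of the variables. It fixes `B = F * P`, so `ρ F` divides `F * P`. A common
divisor of `ρ F` and `P` does not vanish at the origin (as `P` does not), and neither does its
image under `ρ`, which divides `F`; by the hypothesis on `F` it is a unit. So `ρ F ∣ F`, and
applying `ρ`, `F ∣ ρ F`: hence `ρ F = c F` for a constant `c`, and comparing `P = c ρ P` at the
origin gives `c = 1`. A polynomial fixed by both reflections has only even exponents, so it is a
polynomial in `x²` and `y²`.
-/

open MvPolynomial

theorem isRelPrime_map_of_dvd_isUnit {A K : Type*} [CommSemiring A] [CommSemiring K]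
    {φ : A →+* A} (hφ : Function.Involutive φ) (ε : A →+* K) (hε : ∀ a, ε (φ a) = ε a)
    {F P : A} (hP : ε P ≠ 0) (hF : ∀ D, D ∣ F → ε D ≠ 0 → IsUnit D) :
    IsRelPrime (φ F) P := by
  intro c hcF hcP
  have hc : ε c ≠ 0 := fun h => hP (zero_dvd_iff.mp (h ▸ map_dvd ε hcP))
  have hφc : φ c ∣ F := hφ F ▸ map_dvd φ hcF
  simpa only [hφ c] using (hF (φ c) hφc (by rwa [hε])).map φ

namespace MvPolynomial

variable {σ R : Type*}

theorem exists_expand_eq_of_forall_dvd [CommSemiring R] {n : ℕ} {p : MvPolynomial σ R}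
    (h : ∀ m ∈ p.support, ∀ i, n ∣ m i) : ∃ q, expand n q = p := by
  refine ⟨∑ m ∈ p.support, monomial (m.mapRange (· / n) (Nat.zero_div n)) (coeff m p), ?_⟩
  conv_rhs => rw [p.as_sum]
  rw [map_sum]
  refine Finset.sum_congr rfl fun m hm => ?_
  have hm : n • m.mapRange (· / n) (Nat.zero_div n) = m :=
    Finsupp.ext fun i => by simp [Nat.mul_div_cancel' (h m hm i)]
  rw [expand_monomial, hm]

theorem isUnit_of_totalDegree_eq_zero [Field R] {p : MvPolynomial σ R} (x : σ → R)
    (hp : p.totalDegree = 0) (hx : eval x p ≠ 0) : IsUnit p := by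
  rw [totalDegree_eq_zero_iff_eq_C] at hp
  rw [hp, eval_C] at hx
  rw [hp]
  exact (isUnit_iff_ne_zero.mpr hx).map C

theorem map_eq_self_of_map_mul_eq_self [CommRing R] [IsDomain R] [UniqueFactorizationMonoid R]
    {φ : MvPolynomial σ R →+* MvPolynomial σ R} (hφ : Function.Involutive φ) (x : σ → R)
    (hx : ∀ p, eval x (φ p) = eval x p) {F P : MvPolynomial σ R} (hFP : φ (F * P) = F * P)
    (hP : eval x P ≠ 0) (hF : ∀ D, D ∣ F → eval x D ≠ 0 → IsUnit D) : φ F = F := by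
  rcases eq_or_ne F 0 with rfl | hF0
  · exact map_zero φ
  have hφF : φ F ∣ F :=
    (isRelPrime_map_of_dvd_isUnit hφ (eval x) hx hP hF).dvd_of_dvd_mul_right
      ⟨φ P, by rw [← map_mul, hFP]⟩
  have hFφ : F ∣ φ F := by simpa only [hφ F] using map_dvd φ hφF
  obtain ⟨u, hu⟩ := associated_of_dvd_dvd hFφ hφF
  obtain ⟨r, -, hr⟩ := isUnit_iff_eq_C_of_isReduced.mp u.isUnit
  have hPu : P = u * φ P := mul_left_cancel₀ hF0 <| by rw [← mul_assoc, hu, ← map_mul, hFP]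
  have hr1 : r = 1 := by
    have := congrArg (eval x) hPu
    rw [map_mul, hr, eval_C, hx] at this
    exact (mul_eq_right₀ hP).mp this.symm
  rw [← hu, hr, hr1, map_one, mul_one]

variable [CommRing R] [DecidableEq σ]

noncomputable def negVar (j : σ) : MvPolynomial σ R →ₐ[R] MvPolynomial σ R :=
  aeval (Function.update X j (-X j))

theorem negVar_X (j i : σ) : negVar j (X i : MvPolynomial σ R) = if i = j then -X i else X i := by
  by_cases h : i = j
  · subst h; simp [negVar]
  · simp [negVar, h]

theorem negVar_negVar (j : σ) : Function.Involutive (negVar j : MvPolynomial σ R → _) := by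
  intro p
  rw [← AlgHom.comp_apply]
  conv_rhs => rw [← AlgHom.id_apply (R := R) p]
  congr 1
  ext i
  by_cases h : i = j <;> simp [negVar_X, h]

theorem eval_negVar (j : σ) (x : σ → R) (p : MvPolynomial σ R) :
    eval x (negVar j p) = eval (Function.update x j (-x j)) p := by
  suffices (eval x).comp (negVar j).toRingHom = eval (Function.update x j (-x j)) from
    DFunLike.congr_fun this p
  refine ringHom_ext (fun r => by simp [negVar]) (fun i => ?_)
  by_cases h : i = j
  · subst h; simp [negVar_X]
  · simp [negVar_X, h]

theorem negVar_monomial (j : σ) (d : σ →₀ ℕ) (r : R) :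
    negVar j (monomial d r) = monomial d ((-1) ^ d j * r) := by
  induction d using Finsupp.induction generalizing r with
  | zero => simp [negVar]
  | single_add i e d hi he ih =>
    rw [monomial_single_add, map_mul, ih, map_pow, negVar_X, monomial_single_add]
    by_cases h : i = j
    · subst h
      simp only [if_pos, Finsupp.add_apply, Finsupp.single_eq_same,
        Finsupp.notMem_support_iff.mp hi, add_zero, neg_pow (X i : MvPolynomial σ R),
        ← C_mul_monomial, map_pow, map_neg, map_one]
      ring
    · simp [h]

theorem coeff_negVar (j : σ) (m : σ →₀ ℕ) (p : MvPolynomial σ R) :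
    coeff m (negVar j p) = (-1) ^ m j * coeff m p := by
  induction p using MvPolynomial.induction_on' with
  | monomial d r =>
    rw [negVar_monomial, coeff_monomial, coeff_monomial]
    split_ifs with h <;> simp [h]
  | add p q hp hq => simp [hp, hq, mul_add]

theorem even_of_negVar_eq_self [NoZeroDivisors R] [CharZero R] {j : σ} {p : MvPolynomial σ R}
    (h : negVar j p = p) {m : σ →₀ ℕ} (hm : m ∈ p.support) : Even (m j) := by
  by_contra hodd
  have hcoeff := coeff_negVar j m p
  rw [h, (Nat.not_even_iff_odd.mp hodd).neg_one_pow, neg_one_mul,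
    CharZero.eq_neg_self_iff] at hcoeff
  exact mem_support_iff.mp hm hcoeff

theorem eval_negVar_zero (j : σ) (p : MvPolynomial σ R) : eval 0 (negVar j p) = eval 0 p := by
  rw [eval_negVar]; simp

theorem forall_negVar_eq_self_iff [IsDomain R] [Infinite R] (p : MvPolynomial (Fin 2) R) :
    (∀ j, negVar j p = p) ↔
      ∀ x y : R, eval ![x, y] p = eval ![-x, y] p ∧ eval ![x, y] p = eval ![x, -y] p := by
  have h0 (x y : R) : Function.update ![x, y] 0 (-x) = ![-x, y] := by ext i; fin_cases i <;> rfl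
  have h1 (x y : R) : Function.update ![x, y] 1 (-y) = ![x, -y] := by ext i; fin_cases i <;> rfl
  simp only [funext_iff, eval_negVar, Fin.forall_fin_two, Fin.forall_fin_succ_pi,
    Fin.forall_fin_zero_pi]
  change ((∀ x y : R, eval (Function.update ![x, y] 0 (-x)) p = eval ![x, y] p) ∧
    ∀ x y : R, eval (Function.update ![x, y] 1 (-y)) p = eval ![x, y] p) ↔ _
  simp only [h0, h1]
  exact ⟨fun h x y => ⟨(h.1 x y).symm, (h.2 x y).symm⟩,
    fun h => ⟨fun x y => (h x y).1.symm, fun x y => (h x y).2.symm⟩⟩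

end MvPolynomial

theorem stmt5_general (B F P : MvPolynomial (Fin 2) ℂ)
    (hBev : ∀ x y : ℂ, eval ![x, y] B = eval ![-x, y] B ∧
      eval ![x, y] B = eval ![x, -y] B)
    (hfact : B = F * P)
    (hP0 : eval ![0, 0] P ≠ 0)
    (hFfac : ∀ D : MvPolynomial (Fin 2) ℂ, D ∣ F → 0 < D.totalDegree →
      eval ![0, 0] D = 0) :
    (∀ x y : ℂ, eval ![x, y] F = eval ![-x, y] F ∧
      eval ![x, y] F = eval ![x, -y] F) ∧
    ∃ Ft : MvPolynomial (Fin 2) ℂ, ∀ x y : ℂ,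
      eval ![x, y] F = eval ![x ^ 2, y ^ 2] Ft := by
  have hzero : (![0, 0] : Fin 2 → ℂ) = 0 := by ext i; fin_cases i <;> rfl
  rw [hzero] at hP0 hFfac
  have hunit (D : MvPolynomial (Fin 2) ℂ) (hD : D ∣ F) (h0 : eval 0 D ≠ 0) : IsUnit D :=
    isUnit_of_totalDegree_eq_zero 0 (Nat.eq_zero_of_not_pos fun hpos => h0 (hFfac D hD hpos)) h0
  have hFsym (j : Fin 2) : negVar j F = F :=
    map_eq_self_of_map_mul_eq_self (φ := (negVar j).toRingHom) (negVar_negVar j) 0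
      (eval_negVar_zero j) (hfact ▸ (forall_negVar_eq_self_iff B).mpr hBev j) hP0 hunit
  refine ⟨(forall_negVar_eq_self_iff F).mp hFsym, ?_⟩
  obtain ⟨Ft, rfl⟩ := exists_expand_eq_of_forall_dvd (n := 2) fun m hm i =>
    (even_of_negVar_eq_self (hFsym i) hm).two_dvd
  refine ⟨Ft, fun x y => ?_⟩
  have hsq : ![x, y] ^ 2 = ![x ^ 2, y ^ 2] := by ext i; fin_cases i <;> rfl
  rw [eval_expand, hsq]

/-- If `B` is even in each variable, `B = F·P` with `F(0,0)=0`, `P(0,0)≠0`, and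
every nonconstant divisor of `F` vanishes at the origin, then `F` is even in
each variable and is a polynomial in `x², y²`. -/
theorem stmt5 (B F P : MvPolynomial (Fin 2) ℂ)
    (hBev : ∀ x y : ℂ, eval ![x, y] B = eval ![-x, y] B ∧
      eval ![x, y] B = eval ![x, -y] B)
    (hfact : B = F * P)
    (hF0 : eval ![0, 0] F = 0) (hP0 : eval ![0, 0] P ≠ 0)
    (hFfac : ∀ D : MvPolynomial (Fin 2) ℂ, D ∣ F → 0 < D.totalDegree →
      eval ![0, 0] D = 0) :
    (∀ x y : ℂ, eval ![x, y] F = eval ![-x, y] F ∧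
      eval ![x, y] F = eval ![x, -y] F) ∧
    ∃ Ft : MvPolynomial (Fin 2) ℂ, ∀ x y : ℂ,
      eval ![x, y] F = eval ![x ^ 2, y ^ 2] Ft :=
  stmt5_general B F P hBev hfact hP0 hFfac
end

section
/- Let G(u,v) ∈ ℂ[u,v] with G(0,0) ≠ 0, and define B(x,y) = x(1−x)·G(x,y)² + y(1−y)·G(y,x)² (note the symmetric structure G₂(x,y)=G(y,x)). Suppose B = F·P with F(0,0)=0, P(0,0)≠0, and F has no nontrivial polynomial factor with nonzero constant term. Then F is symmetric: F(x,y) = F(y,x). -/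
open MvPolynomial

private lemma const_of_totalDegree_zero (p : MvPolynomial (Fin 2) ℂ)
    (h : p.totalDegree = 0) : p = C (coeff 0 p) := by
  rw [totalDegree_eq_zero_iff] at h
  ext m
  rw [coeff_C]
  split_ifs with hm
  · subst hm; rfl
  · by_contra hc
    have hm0 : m = 0 := by
      ext x; simpa using h m (mem_support_iff.mpr hc) x
    exact hm hm0.symm

private lemma rename_swap_swap (p : MvPolynomial (Fin 2) ℂ) :
    rename (Equiv.swap (0 : Fin 2) 1) (rename (Equiv.swap (0 : Fin 2) 1) p) = p := by
  rw [rename_rename]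
  have : (⇑(Equiv.swap (0 : Fin 2) 1) ∘ ⇑(Equiv.swap (0 : Fin 2) 1)) = id := by
    funext x; simp [Equiv.swap_apply_self]
  rw [this, rename_id, AlgHom.id_apply]

private lemma eval_rename_swap (u v : ℂ) (p : MvPolynomial (Fin 2) ℂ) :
    eval ![u, v] (rename (Equiv.swap (0 : Fin 2) 1) p) = eval ![v, u] p := by
  rw [eval_rename]
  have : (![u, v] ∘ ⇑(Equiv.swap (0 : Fin 2) 1)) = ![v, u] := by
    funext i; fin_cases i <;> simp
  rw [this]

/-- For `B = x(1−x)G(x,y)² + y(1−y)G(y,x)²`, the factor `F` of `B` collecting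
the irreducible factors vanishing at the origin is symmetric under `x ↔ y`. -/
theorem stmt15 (G F P : MvPolynomial (Fin 2) ℂ)
    (hG : eval ![0, 0] G ≠ 0)
    (hfact : F * P = X 0 * (1 - X 0) * G ^ 2 +
      X 1 * (1 - X 1) * (rename (Equiv.swap (0 : Fin 2) 1) G) ^ 2)
    (hF0 : eval ![0, 0] F = 0) (hP0 : eval ![0, 0] P ≠ 0)
    (hFfac : ∀ D : MvPolynomial (Fin 2) ℂ, D ∣ F → 0 < D.totalDegree →
      eval ![0, 0] D = 0) :
    ∀ u v : ℂ, eval ![u, v] F = eval ![v, u] F := by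
  -- F ≠ 0, since the x-derivative of B at the origin is G(0,0)² ≠ 0
  have hFne : F ≠ 0 := by
    intro h
    have h0 : eval ![(0:ℂ),0] (pderiv 0 (F * P)) = eval ![(0:ℂ),0] G ^ 2 := by
      rw [hfact]
      simp [pderiv_mul, pderiv_pow, pderiv_X, Pi.single, Function.update]
    rw [h, zero_mul] at h0
    simp at h0
    exact hG (pow_eq_zero_iff (n := 2) (by norm_num) |>.mp h0.symm)
  -- B is symmetric under the swap
  have hBsymm : rename (Equiv.swap (0 : Fin 2) 1) (F * P) = F * P := by
    rw [hfact]
    simp only [map_add, map_mul, map_pow, map_one, map_sub, rename_X]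
    rw [rename_swap_swap]
    have h01 : Equiv.swap (0 : Fin 2) 1 0 = 1 := Equiv.swap_apply_left 0 1
    have h10 : Equiv.swap (0 : Fin 2) 1 1 = 0 := Equiv.swap_apply_right 0 1
    rw [h01, h10]
    ring
  -- evaluating a renamed polynomial at the origin
  have horig : ∀ q : MvPolynomial (Fin 2) ℂ,
      eval ![(0:ℂ), 0] (rename (Equiv.swap (0 : Fin 2) 1) q) = eval ![0, 0] q := by
    intro q
    simpa using eval_rename_swap (0:ℂ) 0 q
  -- rename σ F divides F * P
  have hdvdB : rename (Equiv.swap (0 : Fin 2) 1) F ∣ F * P :=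
    ⟨rename (Equiv.swap (0 : Fin 2) 1) P, by rw [← map_mul, hBsymm]⟩
  -- rename σ F is relatively prime to P
  have hrel : IsRelPrime (rename (Equiv.swap (0 : Fin 2) 1) F) P := by
    intro D hDF hDP
    have hDne : eval ![(0:ℂ), 0] D ≠ 0 := by
      obtain ⟨E, hE⟩ := hDP
      intro h0
      apply hP0
      rw [hE, map_mul, h0, zero_mul]
    have hdeg : D.totalDegree = 0 := by
      by_contra hd
      obtain ⟨E, hE⟩ := hDF
      have hDF' : rename (Equiv.swap (0 : Fin 2) 1) D ∣ F :=
        ⟨rename (Equiv.swap (0 : Fin 2) 1) E, by rw [← map_mul, ← hE, rename_swap_swap]⟩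
      have hdeg' : 0 < (rename (Equiv.swap (0 : Fin 2) 1) D).totalDegree := by
        have h1 : (rename (Equiv.swap (0 : Fin 2) 1) D).totalDegree ≤ D.totalDegree :=
          totalDegree_rename_le _ _
        have h2 : D.totalDegree ≤ (rename (Equiv.swap (0 : Fin 2) 1) D).totalDegree := by
          conv_lhs => rw [← rename_swap_swap D]
          exact totalDegree_rename_le _ _
        omega
      have := hFfac _ hDF' hdeg'
      rw [horig] at this
      exact hDne this
    have hDC := const_of_totalDegree_zero D hdeg
    have hcne : coeff 0 D ≠ 0 := by
      intro h; rw [h, map_zero] at hDC; rw [hDC] at hDne; simp at hDne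
    set c := coeff 0 D with hc
    refine IsUnit.of_mul_eq_one (a := D) (C c⁻¹) ?_
    rw [hDC, ← C_mul, mul_inv_cancel₀ hcne, C_1]
  -- hence rename σ F divides F
  obtain ⟨E, hE⟩ := hrel.dvd_of_dvd_mul_right hdvdB
  have hE' : rename (Equiv.swap (0 : Fin 2) 1) F = F * rename (Equiv.swap (0 : Fin 2) 1) E := by
    conv_lhs => rw [hE]
    rw [map_mul, rename_swap_swap]
  have hunit : rename (Equiv.swap (0 : Fin 2) 1) E * E = 1 := by
    have h : F * 1 = F * (rename (Equiv.swap (0 : Fin 2) 1) E * E) := by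
      calc F * 1 = F := mul_one F
        _ = rename (Equiv.swap (0 : Fin 2) 1) F * E := hE
        _ = F * rename (Equiv.swap (0 : Fin 2) 1) E * E := by rw [hE']
        _ = F * (rename (Equiv.swap (0 : Fin 2) 1) E * E) := by ring
    exact (mul_left_cancel₀ hFne h).symm
  -- E divides F and its value at the origin is nonzero, so E is a constant
  have hEdvd : E ∣ F := ⟨rename (Equiv.swap (0 : Fin 2) 1) F, hE.trans (mul_comm _ _)⟩
  have hEev : eval ![(0:ℂ), 0] E ≠ 0 := by
    intro h0
    have h := congrArg (eval ![(0:ℂ), 0]) hunit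
    rw [map_mul, h0, mul_zero, map_one] at h
    exact zero_ne_one h
  have hEdeg : E.totalDegree = 0 := by
    by_contra hd
    exact hEev (hFfac E hEdvd (Nat.pos_of_ne_zero hd))
  have hEC := const_of_totalDegree_zero E hEdeg
  have hc2 : coeff 0 E * coeff 0 E = 1 := by
    have h := hunit
    rw [hEC, rename_C, ← C_mul, ← C_1] at h
    exact C_injective _ _ h
  rcases mul_self_eq_one_iff.mp hc2 with h1 | h1
  · -- symmetric case: F = rename σ F
    have hFsym : rename (Equiv.swap (0 : Fin 2) 1) F = F := by
      conv_lhs => rw [hE', hEC, h1]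
      rw [rename_C, C_1, mul_one]
    intro u v
    calc eval ![u, v] F = eval ![u, v] (rename (Equiv.swap (0 : Fin 2) 1) F) := by rw [hFsym]
      _ = eval ![v, u] F := eval_rename_swap u v F
  · -- antisymmetric case is impossible
    exfalso
    have hFanti : rename (Equiv.swap (0 : Fin 2) 1) F = -F := by
      conv_lhs => rw [hE', hEC, h1]
      simp
    have h2 : rename (Equiv.swap (0 : Fin 2) 1) F * rename (Equiv.swap (0 : Fin 2) 1) P
        = F * P := by rw [← map_mul, hBsymm]
    rw [hFanti] at h2
    have h3 : F * (rename (Equiv.swap (0 : Fin 2) 1) P + P) = 0 := by linear_combination -h2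
    rcases mul_eq_zero.mp h3 with h | h
    · exact hFne h
    · have hPanti : rename (Equiv.swap (0 : Fin 2) 1) P = -P := eq_neg_of_add_eq_zero_left h
      have h4 := congrArg (eval ![(0:ℂ), 0]) hPanti
      rw [horig, map_neg] at h4
      exact hP0 (by linear_combination h4 / 2)
end
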